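/- With E_{m,n} and H_{m,n} as the counit and unit matrices of the self-adjunction of Kronecker product with m in Mat_F, for every m, n ≥ 1 the matrix E_{m,n} · H_{m,n} equals m · 1_n (m times the n × n identity matrix). -/

import Mathlib

/-- The "quotient" part of the 0-indexed decomposition `r = (r / b) * b + r % b`
of an index `r < a * b`. -/
def finDiv {a b : ℕ} (r : Fin (a * b)) : Fin a :=
  ⟨(r : ℕ) / b, Nat.div_lt_of_lt_mul (Nat.mul_comm a b ▸ r.isLt)⟩

/-- The "remainder" part of the 0-indexed decomposition `r = (r / b) * b + r % b`
of an index `r < a * b`. -/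
def finMod {a b : ℕ} (r : Fin (a * b)) : Fin b :=
  ⟨(r : ℕ) % b, Nat.mod_lt _ (Nat.pos_of_ne_zero (by
    rintro rfl
    exact absurd r.isLt (by simp)))⟩

variable {R : Type*}

/-- The Kronecker product of an `n × m` matrix and an `l × k` matrix, as an
`(n·l) × (m·k)` matrix: `(M ⊗ N)((i−1)l + p, (j−1)k + q) = M(i,j) · N(p,q)`. -/
def kron [Mul R] {n m l k : ℕ} (M : Matrix (Fin n) (Fin m) R)
    (N : Matrix (Fin l) (Fin k) R) : Matrix (Fin (n * l)) (Fin (m * k)) R :=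
  Matrix.of fun r c => M (finDiv r) (finDiv c) * N (finMod r) (finMod c)

/-- The commutation matrix `S_{m,n}`: the `nm × mn` 0-1 matrix with
`S_{m,n}((i−1)m + j, k) = δ(k, (j−1)n + i)` for `1 ≤ i ≤ n`, `1 ≤ j ≤ m`. -/
def commMatrix [Zero R] [One R] (m n : ℕ) : Matrix (Fin (n * m)) (Fin (m * n)) R :=
  Matrix.of fun r c => if (c : ℕ) = (finMod r : ℕ) * n + (finDiv r : ℕ) then 1 else 0

/-- The counit matrix `E_{m,n} = E_{m,1} ⊗ 1_n`, where `E_{m,1}` is the `1 × m²` matrix with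
`E_{m,1}(1, (i−1)m + j) = δ(i,j)`.  Concretely `E_{m,n}` is the `n × m²n` 0-1 matrix whose
entry at row `r` and column `((i−1)m + j − 1)n + s` is `δ(i,j)·δ(r,s)`. -/
def EMat [Zero R] [One R] (m n : ℕ) : Matrix (Fin n) (Fin (m * m * n)) R :=
  Matrix.of fun r c =>
    if ((c : ℕ) / n) / m = ((c : ℕ) / n) % m ∧ (c : ℕ) % n = (r : ℕ) then 1 else 0

/-- The unit matrix `H_{m,n}`, the transpose of `E_{m,n}`. -/
def HMat [Zero R] [One R] (m n : ℕ) : Matrix (Fin (m * m * n)) (Fin n) R :=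
  (EMat m n).transpose

/-! Indexing a column of `E_{m,n}` by `((a, b), s) : (Fin m × Fin m) × Fin n` through
`finProdFinEquiv`, its entry in row `r` is `δ(a,b)·δ(s,r)`. Hence
`(E_{m,n} · E_{m,n}ᵀ)(r, r') = ∑_{a,b,s} δ(a,b)·δ(s,r)·δ(s,r') = m·δ(r,r')`. -/

open Matrix

@[simp]
theorem finDiv_finProdFinEquiv {a b : ℕ} (p : Fin a × Fin b) :
    finDiv (finProdFinEquiv p) = p.1 :=
  congrArg Prod.fst (finProdFinEquiv.symm_apply_apply p)

@[simp]
theorem finMod_finProdFinEquiv {a b : ℕ} (p : Fin a × Fin b) :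
    finMod (finProdFinEquiv p) = p.2 :=
  congrArg Prod.snd (finProdFinEquiv.symm_apply_apply p)

theorem EMat_apply [Zero R] [One R] (m n : ℕ) (r : Fin n) (c : Fin (m * m * n)) :
    EMat m n r c =
      if finDiv (finDiv c) = finMod (finDiv c) ∧ finMod c = r then (1 : R) else 0 := by
  simp only [EMat, of_apply, Fin.ext_iff]
  rfl

theorem EMat_finProdFinEquiv [Zero R] [One R] (m n : ℕ) (r : Fin n) (a b : Fin m) (s : Fin n) :
    EMat m n r (finProdFinEquiv (finProdFinEquiv (a, b), s)) =
      if a = b ∧ s = r then (1 : R) else 0 := by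
  simp [EMat_apply]

theorem sum_EMat_mul_EMat [NonAssocSemiring R] (m n : ℕ) (r r' : Fin n) :
    ∑ c, (EMat m n r c : R) * EMat m n r' c = if r = r' then (m : R) else 0 := by
  rw [← finProdFinEquiv.sum_comp, Fintype.sum_prod_type, ← finProdFinEquiv.sum_comp]
  simp [EMat_finProdFinEquiv, Fintype.sum_prod_type, ite_and, eq_comm]

theorem EMat_mul_HMat {F : Type*} [Field F] (m n : ℕ) :
    (EMat m n : Matrix (Fin n) (Fin (m * m * n)) F) * HMat m n =
      (m : F) • (1 : Matrix (Fin n) (Fin n) F) := by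
  ext r r'
  rw [Matrix.smul_apply, one_apply, smul_eq_mul, mul_ite, mul_one, mul_zero]
  -- The product here elaborates through the defeq `CStarMatrix` instance, so
  -- `Matrix.mul_apply` does not rewrite it; the entry is closed up to unfolding.
  exact sum_EMat_mul_EMat m n r r'
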